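/- arXiv:2106.08862 — 4 statements merged into one kernel-verified Lean document; each statement's English description precedes it below -/
import Mathlib

section
/- Let ν be a finite Borel measure on (a,b) and f ∈ H¹(a,b). There exists a constant C (depending on a, b, ν but not f) such that ‖f‖_∞ ≤ C(‖∇_Λ f‖²_{L²_Λ(a,b)} + ‖f‖²_{L²_ν})^{1/2}. -/
/-!
By Cauchy–Schwarz, any two values of `f` on `[a, b]` differ by at most
`2 ∫ |g| ≤ 2 √(b - a) ‖g‖₂`. Averaging `|f x| ≤ |f y| + 2 √(b - a) ‖g‖₂` over `y` against `ν`
on `(a, b)` and applying Cauchy–Schwarz once more gives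
`|f x| ≤ ν(a, b)^{-1/2} ‖f‖_{L²_ν} + 2 √(b - a) ‖g‖₂`.
-/

open MeasureTheory Set

section CauchySchwarz

variable {α : Type*} [MeasurableSpace α] {μ : Measure α} [IsFiniteMeasure μ]

lemma integral_abs_le_sqrt_measureReal_mul_sqrt_integral_sq {u : α → ℝ} (hu : MemLp u 2 μ) :
    ∫ t, |u t| ∂μ ≤ √(μ.real univ) * √(∫ t, u t ^ 2 ∂μ) := by
  have hu' : MemLp u (ENNReal.ofReal 2) μ := by simpa using hu
  have hone : MemLp (fun _ ↦ (1 : ℝ)) (ENNReal.ofReal 2) μ := memLp_const 1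
  have holder := integral_mul_norm_le_Lp_mul_Lq Real.HolderConjugate.two_two hu' hone
  simp only [norm_one, mul_one, Real.norm_eq_abs, integral_const, smul_eq_mul,
    Real.rpow_two, sq_abs] at holder
  rw [Real.sqrt_eq_rpow, Real.sqrt_eq_rpow, mul_comm]
  simpa using holder

lemma le_inv_sqrt_measureReal_mul_sqrt_integral_sq_add (hμ : μ ≠ 0) {h : α → ℝ}
    (hh : MemLp h 2 μ) {c D : ℝ} (hc : ∀ᵐ y ∂μ, c ≤ |h y| + D) :
    c ≤ (√(μ.real univ))⁻¹ * √(∫ y, h y ^ 2 ∂μ) + D := by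
  set m := μ.real univ
  have hm : 0 < m := by
    simpa [m, measureReal_def, ENNReal.toReal_pos_iff, Measure.measure_univ_pos] using hμ
  have hint : Integrable h μ := hh.integrable one_le_two
  have hsqrt : √m * √m = m := Real.mul_self_sqrt hm.le
  have hmean : c * m ≤ √m * √(∫ y, h y ^ 2 ∂μ) + D * m := calc
    c * m = ∫ _, c ∂μ := by simp [m, mul_comm]
    _ ≤ ∫ y, (|h y| + D) ∂μ := integral_mono_ae (integrable_const c)
          (hint.abs.add (integrable_const D)) hc
    _ = ∫ y, |h y| ∂μ + D * m := by
          rw [integral_add hint.abs (integrable_const D)]; simp [m, mul_comm]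
    _ ≤ √m * √(∫ y, h y ^ 2 ∂μ) + D * m := by
          gcongr; exact integral_abs_le_sqrt_measureReal_mul_sqrt_integral_sq hh
  rw [← mul_le_mul_iff_of_pos_right hm]
  calc c * m ≤ √m * √(∫ y, h y ^ 2 ∂μ) + D * m := hmean
    _ = ((√m)⁻¹ * √(∫ y, h y ^ 2 ∂μ) + D) * m := by
          field_simp
          linear_combination √(∫ y, h y ^ 2 ∂μ) * hsqrt

end CauchySchwarz

lemma ContinuousOn.memLp_restrict_of_isCompact {α E : Type*} [TopologicalSpace α]
    [MeasurableSpace α] [OpensMeasurableSpace α] [NormedAddCommGroup E]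
    [SecondCountableTopologyEither α E] {μ : Measure α} [IsFiniteMeasureOnCompacts μ]
    {f : α → E} {s : Set α} (hf : ContinuousOn f s) (hs : IsCompact s) (hsm : MeasurableSet s)
    (p : ENNReal) : MemLp f p (μ.restrict s) := by
  have : IsFiniteMeasure (μ.restrict s) := ⟨by simpa using hs.measure_lt_top⟩
  obtain ⟨B, hB⟩ := hs.exists_bound_of_continuousOn hf
  exact MemLp.of_bound (hf.aestronglyMeasurable hsm) B (ae_restrict_of_forall_mem hsm hB)

section Primitive

variable {f g : ℝ → ℝ} {a b : ℝ}

lemma abs_setIntegral_Icc_le_integral_abs (hg : IntegrableOn g (Icc a b)) {z : ℝ} (hz : z ≤ b) :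
    |∫ t in Icc a z, g t| ≤ ∫ t in Icc a b, |g t| :=
  (abs_integral_le_integral_abs).trans <| setIntegral_mono_set hg.abs
    (Filter.Eventually.of_forall fun _ ↦ abs_nonneg _)
    (Filter.Eventually.of_forall <| Icc_subset_Icc_right hz)

lemma continuousOn_of_eq_primitive (hg : IntegrableOn g (Icc a b))
    (hf : ∀ x ∈ Icc a b, f x = f a + ∫ t in Icc a x, g t) : ContinuousOn f (Icc a b) :=
  (continuousOn_const.add (intervalIntegral.continuousOn_primitive_Icc hg)).congr hf

lemma abs_sub_le_of_eq_primitive (hg : IntegrableOn g (Icc a b))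
    (hf : ∀ x ∈ Icc a b, f x = f a + ∫ t in Icc a x, g t) {x y : ℝ} (hx : x ∈ Icc a b)
    (hy : y ∈ Icc a b) : |f x - f y| ≤ 2 * ∫ t in Icc a b, |g t| := by
  rw [hf x hx, hf y hy, add_sub_add_left_eq_sub, two_mul]
  exact (abs_sub _ _).trans (add_le_add (abs_setIntegral_Icc_le_integral_abs hg hx.2)
    (abs_setIntegral_Icc_le_integral_abs hg hy.2))

end Primitive

theorem stmt1_general (a b : ℝ) (ν : Measure ℝ) [IsFiniteMeasure ν]
    (hν : ν (Set.Ioo a b) ≠ 0) :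
    ∃ C : ℝ, ∀ f g : ℝ → ℝ,
      MemLp g 2 (volume.restrict (Set.Icc a b)) →
      (∀ x ∈ Set.Icc a b, f x = f a + ∫ t in Set.Icc a x, g t) →
      ∀ x ∈ Set.Icc a b,
        |f x| ≤ C * Real.sqrt ((∫ t in Set.Ioo a b, (g t) ^ 2) +
          ∫ t in Set.Ioo a b, (f t) ^ 2 ∂ν) := by
  refine ⟨(√(ν.real (Ioo a b)))⁻¹ + 2 * √(volume.real (Icc a b)), fun f g hg hf x hx ↦ ?_⟩
  set M := ν.real (Ioo a b)
  set L := volume.real (Icc a b)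
  set I₁ := ∫ t in Ioo a b, g t ^ 2
  set I₂ := ∫ t in Ioo a b, f t ^ 2 ∂ν
  have hgint : IntegrableOn g (Icc a b) := hg.integrable one_le_two
  have hK : ∫ t in Icc a b, |g t| ≤ √L * √I₁ := by
    simpa only [measureReal_restrict_apply_univ, integral_Icc_eq_integral_Ioo] using
      integral_abs_le_sqrt_measureReal_mul_sqrt_integral_sq hg
  have hosc : ∀ y ∈ Ioo a b, |f x| ≤ |f y| + 2 * √L * √I₁ := by
    intro y hy
    have := abs_sub_le_of_eq_primitive hgint hf hx (Ioo_subset_Icc_self hy)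
    have := abs_sub_abs_le_abs_sub (f x) (f y)
    linarith
  have hfL2 : MemLp f 2 (ν.restrict (Ioo a b)) :=
    ((continuousOn_of_eq_primitive hgint hf).memLp_restrict_of_isCompact isCompact_Icc
      measurableSet_Icc 2).mono_measure (Measure.restrict_mono Ioo_subset_Icc_self le_rfl)
  have hbound := le_inv_sqrt_measureReal_mul_sqrt_integral_sq_add
    (by rwa [Ne, Measure.restrict_eq_zero]) hfL2 (ae_restrict_of_forall_mem measurableSet_Ioo hosc)
  rw [measureReal_restrict_apply_univ] at hbound
  have hI₁ : √I₁ ≤ √(I₁ + I₂) :=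
    Real.sqrt_le_sqrt <| le_add_of_nonneg_right <| integral_nonneg fun _ ↦ sq_nonneg _
  have hI₂ : √I₂ ≤ √(I₁ + I₂) :=
    Real.sqrt_le_sqrt <| le_add_of_nonneg_left <| integral_nonneg fun _ ↦ sq_nonneg _
  calc |f x| ≤ (√M)⁻¹ * √I₂ + 2 * √L * √I₁ := hbound
    _ ≤ (√M)⁻¹ * √(I₁ + I₂) + 2 * √L * √(I₁ + I₂) := by gcongr
    _ = _ := by ring

/-- Sobolev-type sup-norm bound: there is a constant `C` (depending on `a`, `b`, `ν`
but not on `f`) such that every `f ∈ H¹(a,b)` with weak derivative `g` satisfies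
`‖f‖_∞ ≤ C (‖g‖²_{L²_Λ} + ‖f‖²_{L²_ν})^{1/2}`. -/
theorem stmt1 (a b : ℝ) (hab : a < b) (ν : Measure ℝ) [IsFiniteMeasure ν]
    (hν : ν (Set.Ioo a b) ≠ 0) :
    ∃ C : ℝ, ∀ f g : ℝ → ℝ,
      MemLp g 2 (volume.restrict (Set.Icc a b)) →
      (∀ x ∈ Set.Icc a b, f x = f a + ∫ t in Set.Icc a x, g t) →
      ∀ x ∈ Set.Icc a b,
        |f x| ≤ C * Real.sqrt ((∫ t in Set.Ioo a b, (g t) ^ 2) +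
          ∫ t in Set.Ioo a b, (f t) ^ 2 ∂ν) :=
  stmt1_general a b ν hν
end

section
/- Let ν be a finite Borel measure on a compact interval [a,b] and define γ_n = inf over ν-partitions Ξ of (a,b] into at most n half-open intervals (with no ν-atoms at endpoints) of max_{I∈Ξ} Λ(I)ν(I). Then for all n ∈ ℕ, γ_{2^{n+1}} ≤ (1/2)·γ_{2^n}. -/
/-!
Take a ν-partition of `(a,b]` whose maximal product `Λ(I)·ν(I)` is `x`, and split each of its
intervals at a point without ν-atom lying within `δ` of the midpoint; such points exist because
a finite measure has only countably many atoms. Each half has length at most half the old length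
plus `δ` and ν-mass at most the old mass, so its product is at most `x/2 + δ·ν(ℝ)`, while the
number of intervals only doubles. Letting `δ → 0` gives `γ_{2N} ≤ γ_N / 2`.
-/

open MeasureTheory

/-- `gammaN ν a b n` is the infimum over ν-partitions of `(a,b]` into at most `n`
half-open intervals (with no ν-atoms at the endpoints) of the maximal value of
`Λ(I)·ν(I)` over the intervals `I` of the partition. -/
noncomputable def gammaN (ν : Measure ℝ) (a b : ℝ) (n : ℕ) : ℝ :=
  sInf { x : ℝ | ∃ m : ℕ, ∃ c : ℕ → ℝ, 1 ≤ m ∧ m ≤ n ∧ c 0 = a ∧ c m = b ∧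
    (∀ k < m, c k < c (k + 1)) ∧ (∀ k ≤ m, ν {c k} = 0) ∧
    x = sSup { y : ℝ | ∃ k < m,
      y = (volume (Set.Ioc (c k) (c (k + 1)))).toReal *
        (ν (Set.Ioc (c k) (c (k + 1)))).toReal } }

open Set

theorem exists_measure_singleton_eq_zero_mem_Ioo (ν : Measure ℝ) [SFinite ν] {u v : ℝ}
    (huv : u < v) : ∃ s ∈ Ioo u v, ν {s} = 0 := by
  have hatoms : {x : ℝ | 0 < ν {x}}.Countable :=
    Measure.countable_meas_pos_of_disjoint_iUnion (fun _ => measurableSet_singleton _)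
      fun _ _ hxy => disjoint_singleton.mpr hxy
  obtain ⟨s, hs, hsuv⟩ := (hatoms.dense_compl ℝ).exists_between huv
  exact ⟨s, hsuv, by simpa using hs⟩

theorem exists_measure_singleton_eq_zero_near_midpoint (ν : Measure ℝ) [SFinite ν]
    {u v δ : ℝ} (huv : u < v) (hδ : 0 < δ) :
    ∃ s ∈ Ioo u v, ν {s} = 0 ∧ s - u ≤ (v - u) / 2 + δ ∧ v - s ≤ (v - u) / 2 + δ := by
  obtain ⟨s, ⟨hs₁, hs₂⟩, hs⟩ := exists_measure_singleton_eq_zero_mem_Ioo ν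
    (show max u ((u + v) / 2 - δ) < min v ((u + v) / 2 + δ) by
      simp only [max_lt_iff, lt_min_iff]; refine ⟨⟨?_, ?_⟩, ?_, ?_⟩ <;> linarith)
  simp only [max_lt_iff, lt_min_iff] at hs₁ hs₂
  exact ⟨s, ⟨hs₁.1, hs₂.1⟩, hs, by linarith, by linarith⟩

theorem volume_real_mul_measureReal_Ioc_le_half_add (ν : Measure ℝ) [IsFiniteMeasure ν]
    {u s t v δ : ℝ} (hus : u ≤ s) (hst : s ≤ t) (htv : t ≤ v) (hδ : 0 ≤ δ)
    (hlen : t - s ≤ (v - u) / 2 + δ) :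
    volume.real (Ioc s t) * ν.real (Ioc s t) ≤
      volume.real (Ioc u v) * ν.real (Ioc u v) / 2 + δ * ν.real univ := by
  have hmass : ν.real (Ioc s t) ≤ ν.real (Ioc u v) := measureReal_mono (Ioc_subset_Ioc hus htv)
  have hmass_univ : ν.real (Ioc u v) ≤ ν.real univ := measureReal_mono (subset_univ _)
  rw [Real.volume_real_Ioc_of_le hst, Real.volume_real_Ioc_of_le (hus.trans (hst.trans htv))]
  calc (t - s) * ν.real (Ioc s t) ≤ ((v - u) / 2 + δ) * ν.real (Ioc u v) := by
        gcongr
        linarith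
    _ ≤ (v - u) * ν.real (Ioc u v) / 2 + δ * ν.real univ := by nlinarith

namespace gammaN

variable (ν : Measure ℝ) (a b : ℝ)

noncomputable def cellProduct (c : ℕ → ℝ) (k : ℕ) : ℝ :=
  volume.real (Ioc (c k) (c (k + 1))) * ν.real (Ioc (c k) (c (k + 1)))

noncomputable def maxCellProduct (c : ℕ → ℝ) (m : ℕ) : ℝ :=
  sSup {y | ∃ k < m, y = cellProduct ν c k}

def IsPartition (m : ℕ) (c : ℕ → ℝ) : Prop :=
  c 0 = a ∧ c m = b ∧ (∀ k < m, c k < c (k + 1)) ∧ ∀ k ≤ m, ν {c k} = 0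

def values (n : ℕ) : Set ℝ :=
  {x | ∃ m c, 1 ≤ m ∧ m ≤ n ∧ IsPartition ν a b m c ∧ x = maxCellProduct ν c m}

theorem eq_sInf_values (n : ℕ) : gammaN ν a b n = sInf (values ν a b n) := by
  simp only [gammaN, values, IsPartition, and_assoc]
  rfl

variable {ν a b}

theorem le_maxCellProduct {c : ℕ → ℝ} {m k : ℕ} (hk : k < m) :
    cellProduct ν c k ≤ maxCellProduct ν c m := by
  refine le_csSup (((finite_Iio m).image (cellProduct ν c)).subset ?_).bddAbove ⟨k, hk, rfl⟩
  rintro _ ⟨j, hj, rfl⟩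
  exact ⟨j, hj, rfl⟩

theorem maxCellProduct_le {c : ℕ → ℝ} {m : ℕ} (hm : 1 ≤ m) {B : ℝ}
    (h : ∀ k < m, cellProduct ν c k ≤ B) : maxCellProduct ν c m ≤ B :=
  csSup_le ⟨_, 0, hm, rfl⟩ fun _ ⟨k, hk, hy⟩ => hy ▸ h k hk

theorem maxCellProduct_nonneg {c : ℕ → ℝ} {m : ℕ} (hm : 1 ≤ m) :
    0 ≤ maxCellProduct ν c m :=
  (mul_nonneg measureReal_nonneg measureReal_nonneg).trans (le_maxCellProduct hm)

theorem bddBelow_values (n : ℕ) : BddBelow (values ν a b n) := by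
  refine ⟨0, ?_⟩
  rintro _ ⟨m, c, hm, -, -, rfl⟩
  exact maxCellProduct_nonneg hm

theorem values_eq_empty (hatom : ν {a} ≠ 0 ∨ ν {b} ≠ 0) (n : ℕ) :
    values ν a b n = ∅ := by
  refine eq_empty_of_forall_notMem ?_
  rintro _ ⟨m, c, -, -, ⟨rfl, rfl, -, hc⟩, -⟩
  exact hatom.elim (· (hc 0 m.zero_le)) (· (hc m le_rfl))

theorem values_nonempty (hab : a < b) (ha : ν {a} = 0) (hb : ν {b} = 0) {n : ℕ}
    (hn : 1 ≤ n) :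
    (values ν a b n).Nonempty := by
  refine ⟨_, 1, fun k => if k = 0 then a else b, le_rfl, hn, ⟨rfl, rfl, ?_, ?_⟩, rfl⟩
  · intro k hk
    obtain rfl : k = 0 := by omega
    simpa using hab
  · intro k hk
    interval_cases k <;> simpa

def interleave (c s : ℕ → ℝ) (j : ℕ) : ℝ :=
  if Even j then c (j / 2) else s (j / 2)

theorem interleave_two_mul (c s : ℕ → ℝ) (k : ℕ) : interleave c s (2 * k) = c k := by
  simp [interleave]

theorem interleave_two_mul_add_one (c s : ℕ → ℝ) (k : ℕ) :
    interleave c s (2 * k + 1) = s k := by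
  simp [interleave, Nat.add_div_of_dvd_right]

theorem interleave_two_mul_add_two (c s : ℕ → ℝ) (k : ℕ) :
    interleave c s (2 * k + 1 + 1) = c (k + 1) :=
  interleave_two_mul c s (k + 1)

theorem isPartition_interleave {m : ℕ} {c s : ℕ → ℝ} (hc : IsPartition ν a b m c)
    (hs : ∀ k < m, s k ∈ Ioo (c k) (c (k + 1)) ∧ ν {s k} = 0) :
    IsPartition ν a b (2 * m) (interleave c s) := by
  obtain ⟨hc0, hcm, hmono, hatom⟩ := hc
  refine ⟨by simpa using interleave_two_mul c s 0 ▸ hc0, interleave_two_mul c s m ▸ hcm,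
    ?_, ?_⟩
  · intro j hj
    obtain ⟨k, rfl | rfl⟩ := Nat.even_or_odd' j
    · rw [interleave_two_mul, interleave_two_mul_add_one]
      exact (hs k (by omega)).1.1
    · rw [interleave_two_mul_add_one, interleave_two_mul_add_two]
      exact (hs k (by omega)).1.2
  · intro j hj
    obtain ⟨k, rfl | rfl⟩ := Nat.even_or_odd' j
    · rw [interleave_two_mul]
      exact hatom k (by omega)
    · rw [interleave_two_mul_add_one]
      exact (hs k (by omega)).2

variable [IsFiniteMeasure ν]

theorem exists_isPartition_maxCellProduct_le {m : ℕ} {c : ℕ → ℝ} (hm : 1 ≤ m)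
    (hc : IsPartition ν a b m c) {ε : ℝ} (hε : 0 < ε) :
    ∃ d, IsPartition ν a b (2 * m) d ∧
      maxCellProduct ν d (2 * m) ≤ maxCellProduct ν c m / 2 + ε := by
  set δ := ε / (ν.real univ + 1)
  have hδ : 0 < δ := div_pos hε (by positivity)
  have hδε : δ * ν.real univ ≤ ε := by
    rw [div_mul_eq_mul_div, div_le_iff₀ (by positivity)]
    nlinarith [measureReal_nonneg (μ := ν) (s := univ)]
  choose! s hs using fun k (hk : k < m) =>
    exists_measure_singleton_eq_zero_near_midpoint ν (hc.2.2.1 k hk) hδ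
  refine ⟨interleave c s,
    isPartition_interleave hc fun k hk => ⟨(hs k hk).1, (hs k hk).2.1⟩, ?_⟩
  refine maxCellProduct_le (by omega) fun j hj => ?_
  have hhalf : ∀ k < m,
      cellProduct ν c k / 2 + δ * ν.real univ ≤ maxCellProduct ν c m / 2 + ε :=
    fun k hk => by linarith [le_maxCellProduct (ν := ν) (c := c) hk]
  obtain ⟨k, rfl | rfl⟩ := Nat.even_or_odd' j
  · obtain ⟨⟨hs₁, hs₂⟩, -, hlen, -⟩ := hs k (by omega)
    refine le_trans ?_ (hhalf k (by omega))
    simp only [cellProduct, interleave_two_mul, interleave_two_mul_add_one]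
    exact volume_real_mul_measureReal_Ioc_le_half_add ν le_rfl hs₁.le hs₂.le hδ.le hlen
  · obtain ⟨⟨hs₁, hs₂⟩, -, -, hlen⟩ := hs k (by omega)
    refine le_trans ?_ (hhalf k (by omega))
    simp only [cellProduct, interleave_two_mul_add_one, interleave_two_mul_add_two]
    exact volume_real_mul_measureReal_Ioc_le_half_add ν hs₁.le hs₂.le le_rfl hδ.le hlen

theorem two_mul_le (hab : a < b) {N : ℕ} (hN : 1 ≤ N) :
    gammaN ν a b (2 * N) ≤ 1 / 2 * gammaN ν a b N := by
  simp only [eq_sInf_values]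
  by_cases hatom : ν {a} ≠ 0 ∨ ν {b} ≠ 0
  · simp [values_eq_empty hatom]
  push Not at hatom
  suffices 2 * sInf (values ν a b (2 * N)) ≤ sInf (values ν a b N) by linarith
  refine le_csInf (values_nonempty hab hatom.1 hatom.2 hN) ?_
  rintro _ ⟨m, c, hm, hmN, hc, rfl⟩
  suffices ∀ ε > 0, sInf (values ν a b (2 * N)) ≤ maxCellProduct ν c m / 2 + ε by
    linarith [le_of_forall_pos_le_add this]
  intro ε hε
  obtain ⟨d, hd, hdc⟩ := exists_isPartition_maxCellProduct_le hm hc hε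
  exact (csInf_le (bddBelow_values _) ⟨2 * m, d, by omega, by omega, hd, rfl⟩).trans hdc

end gammaN

/-- Halving the maximal product by doubling the number of partition intervals:
`γ_{2^{n+1}} ≤ (1/2)·γ_{2^n}`. -/
theorem stmt2 (ν : Measure ℝ) [IsFiniteMeasure ν] (a b : ℝ) (hab : a < b) (n : ℕ) :
    gammaN ν a b (2 ^ (n + 1)) ≤ (1 / 2) * gammaN ν a b (2 ^ n) := by
  rw [pow_succ']
  exact gammaN.two_mul_le hab Nat.one_le_two_pow
end

section
/- Let ν be a Borel probability measure on (0,1] with L^q-spectrum β_ν, and suppose q̄ := inf{q > 0 : β_ν(q) − q ≤ 0} > 0. Then q̄ ∈ (0,1), q̄ is the unique fixed point of β_ν on (0,1), i.e. β_ν(q̄) = q̄, and q̄ = inf{q > 0 : Σ_{C ∈ D_ν} (ν(C)Λ(C))^q < ∞}, where D_ν = ∪_n D_{ν,n}. -/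
open MeasureTheory
open scoped Classical

/-- The dyadic interval `A_k^n = (k·2^{-n}, (k+1)·2^{-n}]`. -/
def dyadic (n k : ℕ) : Set ℝ := Set.Ioc ((k : ℝ) / 2 ^ n) (((k : ℝ) + 1) / 2 ^ n)

/-- `betan ν n q = (1/(n log 2)) log Σ_{C ∈ D_{ν,n}} ν(C)^q`, the `n`-th approximation
of the `L^q`-spectrum, where `D_{ν,n}` is the set of dyadic intervals of generation `n`
with positive `ν`-measure. -/
noncomputable def betan (ν : Measure ℝ) (n : ℕ) (q : ℝ) : ℝ :=
  (1 / ((n : ℝ) * Real.log 2)) *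
    Real.log (∑ k ∈ (Finset.range (2 ^ n)).filter (fun k => ν (dyadic n k) ≠ 0),
      ((ν (dyadic n k)).toReal) ^ q)

/-- The `L^q`-spectrum `β_ν(q) = limsup_n betan ν n q`. -/
noncomputable def lqSpectrum (ν : Measure ℝ) (q : ℝ) : ℝ :=
  Filter.atTop.limsup (fun n => betan ν n q)

/-!
Write `S_n(q) = ∑_{C ∈ D_{ν,n}} ν(C)^q`, so that `β_n(q) = log₂ S_n(q) / n`. Hölder's inequality
makes `q ↦ log S_n(q)` convex, and `2^{-nq} ≤ S_n(q) ≤ 2^n` for `q ≥ 0` (pigeonhole for the lower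
bound), so `β_ν` is a finite limsup of convex non-increasing functions: convex, hence continuous,
on `(0, ∞)`, non-increasing, with `β_ν(1) = 0`. Thus `q ↦ β_ν(q) - q` is continuous, strictly
decreasing and negative at `1`, and `q̄` is its unique zero, which lies in `(0, 1)`.

For the series, `∑_{C ∈ D_{ν,n}} (ν(C)Λ(C))^q = 2^{n(β_n(q) - q)}`: if `β_ν(q) < q` this is
eventually dominated by a geometric sequence, and if `β_ν(q) > q` infinitely many terms are `≥ 1`.
So the series converges for `q > q̄` and diverges for `q < q̄`.
-/

open Filter Finset Real Topology

section SumRpow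

variable {ι : Type*} {s : Finset ι} {r : ι → ℝ}

theorem sum_rpow_add_le_rpow_mul_rpow (hr : ∀ i ∈ s, 0 < r i) (a b : ℝ) {t u : ℝ}
    (ht : 0 ≤ t) (hu : 0 ≤ u) (htu : t + u = 1) :
    ∑ i ∈ s, r i ^ (t * a + u * b) ≤ (∑ i ∈ s, r i ^ a) ^ t * (∑ i ∈ s, r i ^ b) ^ u := by
  rcases ht.eq_or_lt with rfl | ht
  · simp [show u = 1 by linarith]
  rcases hu.eq_or_lt with rfl | hu
  · simp [show t = 1 by linarith]
  have hpow : ∀ c {v : ℝ}, 0 < v → ∀ i ∈ s, (r i ^ (v * c)) ^ v⁻¹ = r i ^ c := fun c v hv i hi => by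
    rw [← rpow_mul (hr i hi).le, mul_right_comm, mul_inv_cancel₀ hv.ne', one_mul]
  have holder := inner_le_Lp_mul_Lq_of_nonneg s (HolderConjugate.inv_inv ht hu htu)
    (f := fun i => r i ^ (t * a)) (g := fun i => r i ^ (u * b))
    (fun i hi => (rpow_pos_of_pos (hr i hi) _).le) (fun i hi => (rpow_pos_of_pos (hr i hi) _).le)
  simp only [one_div, inv_inv, sum_congr rfl (hpow a ht), sum_congr rfl (hpow b hu)] at holder
  calc ∑ i ∈ s, r i ^ (t * a + u * b) = ∑ i ∈ s, r i ^ (t * a) * r i ^ (u * b) :=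
        sum_congr rfl fun i hi => rpow_add (hr i hi) _ _
    _ ≤ _ := holder

theorem convexOn_log_sum_rpow (hs : s.Nonempty) (hr : ∀ i ∈ s, 0 < r i) :
    ConvexOn ℝ Set.univ (fun q : ℝ => log (∑ i ∈ s, r i ^ q)) := by
  have hpos : ∀ q : ℝ, 0 < ∑ i ∈ s, r i ^ q := fun q =>
    sum_pos (fun i hi => rpow_pos_of_pos (hr i hi) q) hs
  refine ⟨convex_univ, fun a _ b _ t u ht hu htu => ?_⟩
  calc log (∑ i ∈ s, r i ^ (t • a + u • b))
      ≤ log ((∑ i ∈ s, r i ^ a) ^ t * (∑ i ∈ s, r i ^ b) ^ u) :=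
        log_le_log (hpos _) (sum_rpow_add_le_rpow_mul_rpow hr a b ht hu htu)
    _ = t • log (∑ i ∈ s, r i ^ a) + u • log (∑ i ∈ s, r i ^ b) := by
        rw [log_mul (rpow_pos_of_pos (hpos a) t).ne' (rpow_pos_of_pos (hpos b) u).ne',
          log_rpow (hpos a), log_rpow (hpos b), smul_eq_mul, smul_eq_mul]

end SumRpow

theorem ConvexOn.limsup {ι E : Type*} [AddCommMonoid E] [Module ℝ E] {l : Filter ι} {s : Set E}
    {f : ι → E → ℝ}
    (hf : ∀ i, ConvexOn ℝ s (f i))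
    (hbdd : ∀ x ∈ s, IsBoundedUnder (· ≤ ·) l (f · x))
    (hcobdd : ∀ x ∈ s, IsCoboundedUnder (· ≤ ·) l (f · x))
    (hs : Convex ℝ s) :
    ConvexOn ℝ s (fun x => l.limsup (f · x)) := by
  refine ⟨hs, fun x hx y hy t u ht hu htu => ?_⟩
  simp only [smul_eq_mul]
  refine le_of_forall_pos_le_add fun ε hε => ?_
  have hx' := eventually_lt_of_limsup_lt (lt_add_of_pos_right (l.limsup (f · x)) hε) (hbdd x hx)
  have hy' := eventually_lt_of_limsup_lt (lt_add_of_pos_right (l.limsup (f · y)) hε) (hbdd y hy)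
  refine limsup_le_of_le (hcobdd _ (hs hx hy ht hu htu)) ?_
  filter_upwards [hx', hy'] with i hix hiy
  have hconv := (hf i).2 hx hy ht hu htu
  simp only [smul_eq_mul] at hconv
  nlinarith [mul_le_mul_of_nonneg_left hix.le ht, mul_le_mul_of_nonneg_left hiy.le hu]

theorem ContinuousAt.apply_eq_zero_of_eq_sInf {f : ℝ → ℝ} {a : ℝ}
    (ha : a = sInf {q | 0 < q ∧ f q ≤ 0}) (hne : {q | 0 < q ∧ f q ≤ 0}.Nonempty)
    (hpos : 0 < a) (hf : ContinuousAt f a) : f a = 0 := by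
  set A := {q | 0 < q ∧ f q ≤ 0}
  have hbdd : BddBelow A := ⟨0, fun q hq => hq.1.le⟩
  apply le_antisymm
  · have hmem : a ∈ closure A := ha ▸ csInf_mem_closure hne hbdd
    exact hf.continuousWithinAt.closure_le hmem continuousWithinAt_const fun q hq => hq.2
  · have hleft : ∀ᶠ q in 𝓝[<] a, 0 < f q := by
      filter_upwards [self_mem_nhdsWithin, nhdsWithin_le_nhds (lt_mem_nhds hpos)] with q hqa hq0
      by_contra! hfq
      exact notMem_of_lt_csInf (ha ▸ hqa) hbdd ⟨hq0, hfq⟩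
    exact ge_of_tendsto (hf.tendsto.mono_left nhdsWithin_le_nhds) (hleft.mono fun q => le_of_lt)

section Dyadic

variable (ν : Measure ℝ)

theorem sum_measure_dyadic (n : ℕ) : ∑ k ∈ range (2 ^ n), ν (dyadic n k) = ν (Set.Ioc 0 1) := by
  have hprefix : ∀ m : ℕ, ∑ k ∈ range m, ν (dyadic n k) = ν (Set.Ioc 0 ((m : ℝ) / 2 ^ n)) := by
    intro m
    induction m with
    | zero => simp
    | succ m ih =>
      rw [sum_range_succ, ih, dyadic, ← measure_union (Set.Ioc_disjoint_Ioc_of_le le_rfl)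
        measurableSet_Ioc, Set.Ioc_union_Ioc_eq_Ioc (by positivity) (by gcongr; linarith),
        Nat.cast_succ]
  rw [hprefix, Nat.cast_pow, Nat.cast_ofNat, div_self (by positivity)]

noncomputable def dyadicSupport (n : ℕ) : Finset ℕ :=
  (range (2 ^ n)).filter (fun k => ν (dyadic n k) ≠ 0)

noncomputable def partitionSum (n : ℕ) (q : ℝ) : ℝ :=
  ∑ k ∈ dyadicSupport ν n, (ν (dyadic n k)).toReal ^ q

theorem betan_eq (n : ℕ) (q : ℝ) :
    betan ν n q = 1 / (n * log 2) * log (partitionSum ν n q) := rfl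

variable {ν}

theorem measure_dyadic_le_one (hν : ν (Set.Ioc 0 1) = 1) {n k : ℕ} (hk : k ∈ range (2 ^ n)) :
    ν (dyadic n k) ≤ 1 :=
  calc ν (dyadic n k) ≤ ∑ k ∈ range (2 ^ n), ν (dyadic n k) :=
        single_le_sum (f := fun k => ν (dyadic n k)) (fun _ _ => zero_le) hk
    _ = 1 := (sum_measure_dyadic ν n).trans hν

theorem sum_toReal_measure_dyadic (hν : ν (Set.Ioc 0 1) = 1) (n : ℕ) :
    ∑ k ∈ range (2 ^ n), (ν (dyadic n k)).toReal = 1 := by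
  rw [← ENNReal.toReal_sum fun k hk => (measure_dyadic_le_one hν hk).trans_lt ENNReal.one_lt_top
    |>.ne, sum_measure_dyadic, hν, ENNReal.toReal_one]

theorem toReal_measure_dyadic_mem_Ioc (hν : ν (Set.Ioc 0 1) = 1) {n k : ℕ}
    (hk : k ∈ dyadicSupport ν n) : (ν (dyadic n k)).toReal ∈ Set.Ioc 0 1 := by
  obtain ⟨hk, hk0⟩ := mem_filter.1 hk
  have hle := measure_dyadic_le_one hν hk
  exact ⟨ENNReal.toReal_pos hk0 (hle.trans_lt ENNReal.one_lt_top).ne,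
    ENNReal.toReal_le_of_le_ofReal zero_le_one (by simpa using hle)⟩

theorem exists_inv_two_pow_le_toReal_measure_dyadic (hν : ν (Set.Ioc 0 1) = 1) (n : ℕ) :
    ∃ k ∈ dyadicSupport ν n, ((2 : ℝ) ^ n)⁻¹ ≤ (ν (dyadic n k)).toReal := by
  have hmean : ∑ _k ∈ range (2 ^ n), ((2 : ℝ) ^ n)⁻¹
      ≤ ∑ k ∈ range (2 ^ n), (ν (dyadic n k)).toReal := by
    simp [sum_toReal_measure_dyadic hν]
  obtain ⟨k, hk, hle⟩ := exists_le_of_sum_le (nonempty_range_iff.2 (by positivity)) hmean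
  refine ⟨k, mem_filter.2 ⟨hk, fun h0 => ?_⟩, hle⟩
  simp only [h0, ENNReal.toReal_zero] at hle
  exact (inv_pos.2 (pow_pos two_pos n)).not_ge hle

theorem dyadicSupport_nonempty (hν : ν (Set.Ioc 0 1) = 1) (n : ℕ) : (dyadicSupport ν n).Nonempty :=
  let ⟨k, hk, _⟩ := exists_inv_two_pow_le_toReal_measure_dyadic hν n; ⟨k, hk⟩

theorem partitionSum_pos (hν : ν (Set.Ioc 0 1) = 1) (n : ℕ) (q : ℝ) : 0 < partitionSum ν n q :=
  sum_pos (fun _ hk => rpow_pos_of_pos (toReal_measure_dyadic_mem_Ioc hν hk).1 q)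
    (dyadicSupport_nonempty hν n)

theorem partitionSum_one (hν : ν (Set.Ioc 0 1) = 1) (n : ℕ) : partitionSum ν n 1 = 1 := by
  simp only [partitionSum, dyadicSupport, rpow_one]
  rw [sum_filter_of_ne fun k _ h => by contrapose! h; simp [h], sum_toReal_measure_dyadic hν]

theorem partitionSum_antitone (hν : ν (Set.Ioc 0 1) = 1) (n : ℕ) :
    Antitone (partitionSum ν n) := fun _ _ h =>
  sum_le_sum fun _ hk => rpow_le_rpow_of_exponent_ge (toReal_measure_dyadic_mem_Ioc hν hk).1
    (toReal_measure_dyadic_mem_Ioc hν hk).2 h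

theorem partitionSum_le_two_pow (hν : ν (Set.Ioc 0 1) = 1) (n : ℕ) {q : ℝ} (hq : 0 ≤ q) :
    partitionSum ν n q ≤ 2 ^ n := by
  calc partitionSum ν n q ≤ ∑ _k ∈ dyadicSupport ν n, (1 : ℝ) :=
        sum_le_sum fun _ hk => rpow_le_one (toReal_measure_dyadic_mem_Ioc hν hk).1.le
          (toReal_measure_dyadic_mem_Ioc hν hk).2 hq
    _ ≤ ∑ _k ∈ range (2 ^ n), (1 : ℝ) := sum_le_sum_of_subset_of_nonneg (filter_subset _ _)
        fun _ _ _ => zero_le_one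
    _ = 2 ^ n := by simp

theorem inv_two_pow_rpow (n : ℕ) (q : ℝ) : ((2 : ℝ) ^ n)⁻¹ ^ q = 2 ^ (n * -q) := by
  rw [mul_neg, rpow_neg zero_le_two, rpow_mul zero_le_two, rpow_natCast, inv_rpow (by positivity)]

theorem two_rpow_neg_le_partitionSum (hν : ν (Set.Ioc 0 1) = 1) (n : ℕ) {q : ℝ} (hq : 0 ≤ q) :
    (2 : ℝ) ^ (n * -q) ≤ partitionSum ν n q := by
  obtain ⟨k, hk, hle⟩ := exists_inv_two_pow_le_toReal_measure_dyadic hν n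
  rw [← inv_two_pow_rpow]
  calc ((2 : ℝ) ^ n)⁻¹ ^ q ≤ (ν (dyadic n k)).toReal ^ q := by gcongr
    _ ≤ partitionSum ν n q := single_le_sum (f := fun k => (ν (dyadic n k)).toReal ^ q)
        (fun _ _ => rpow_nonneg ENNReal.toReal_nonneg q) hk

theorem partitionSum_eq_two_rpow (hν : ν (Set.Ioc 0 1) = 1) {n : ℕ} (hn : n ≠ 0) (q : ℝ) :
    partitionSum ν n q = 2 ^ (n * betan ν n q) := by
  have hlog2 : log 2 ≠ 0 := (log_pos one_lt_two).ne'
  rw [betan_eq, rpow_def_of_pos two_pos]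
  refine (exp_log (partitionSum_pos hν n q)).symm.trans (congrArg exp ?_)
  field_simp

end Dyadic

section Spectrum

variable {ν : Measure ℝ}

theorem betan_mem_Icc (hν : ν (Set.Ioc 0 1) = 1) {n : ℕ} (hn : n ≠ 0) {q : ℝ} (hq : 0 ≤ q) :
    betan ν n q ∈ Set.Icc (-q) 1 := by
  have hn' : (0 : ℝ) < n := Nat.cast_pos.2 (Nat.pos_of_ne_zero hn)
  have hS := partitionSum_eq_two_rpow hν hn q
  constructor
  · have h := two_rpow_neg_le_partitionSum hν n hq
    rw [hS, rpow_le_rpow_left_iff one_lt_two] at h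
    exact le_of_mul_le_mul_left h hn'
  · have h := partitionSum_le_two_pow hν n hq
    rw [hS, ← rpow_natCast, rpow_le_rpow_left_iff one_lt_two] at h
    exact le_of_mul_le_mul_left (by rwa [mul_one]) hn'

theorem betan_antitone (hν : ν (Set.Ioc 0 1) = 1) (n : ℕ) : Antitone (betan ν n) := by
  intro q' q h
  rw [betan_eq, betan_eq]
  have hlog := log_le_log (partitionSum_pos hν n q) (partitionSum_antitone hν n h)
  have hlog2 := (log_pos one_lt_two).le
  gcongr

theorem convexOn_betan (hν : ν (Set.Ioc 0 1) = 1) (n : ℕ) : ConvexOn ℝ Set.univ (betan ν n) :=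
  (convexOn_log_sum_rpow (dyadicSupport_nonempty hν n)
    fun _ hk => (toReal_measure_dyadic_mem_Ioc hν hk).1).smul
    (one_div_nonneg.2 (mul_nonneg n.cast_nonneg (log_pos one_lt_two).le))

theorem isBoundedUnder_le_betan (hν : ν (Set.Ioc 0 1) = 1) {q : ℝ} (hq : 0 ≤ q) :
    IsBoundedUnder (· ≤ ·) atTop (betan ν · q) :=
  isBoundedUnder_of_eventually_le
    ((eventually_ne_atTop 0).mono fun _ hn => (betan_mem_Icc hν hn hq).2)

theorem isCoboundedUnder_le_betan (hν : ν (Set.Ioc 0 1) = 1) {q : ℝ} (hq : 0 ≤ q) :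
    IsCoboundedUnder (· ≤ ·) atTop (betan ν · q) :=
  isCoboundedUnder_le_of_eventually_le atTop
    ((eventually_ne_atTop 0).mono fun _ hn => (betan_mem_Icc hν hn hq).1)

theorem lqSpectrum_one (hν : ν (Set.Ioc 0 1) = 1) : lqSpectrum ν 1 = 0 := by
  simp [lqSpectrum, betan_eq, partitionSum_one hν]

theorem lqSpectrum_antitoneOn (hν : ν (Set.Ioc 0 1) = 1) :
    AntitoneOn (lqSpectrum ν) (Set.Ici 0) := fun _ hq' _ hq h =>
  limsup_le_limsup (Eventually.of_forall fun n => betan_antitone hν n h)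
    (isCoboundedUnder_le_betan hν hq) (isBoundedUnder_le_betan hν hq')

theorem strictAntiOn_lqSpectrum_sub_id (hν : ν (Set.Ioc 0 1) = 1) :
    StrictAntiOn (fun q => lqSpectrum ν q - q) (Set.Ioi 0) := fun _ hq' _ hq h => by
  have := lqSpectrum_antitoneOn hν (Set.mem_Ici.2 (le_of_lt hq')) (Set.mem_Ici.2 (le_of_lt hq)) h.le
  simp only
  linarith

theorem lqSpectrum_convexOn (hν : ν (Set.Ioc 0 1) = 1) : ConvexOn ℝ (Set.Ici 0) (lqSpectrum ν) :=
  ConvexOn.limsup (fun n => (convexOn_betan hν n).subset (Set.subset_univ _) (convex_Ici 0))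
    (fun _ hq => isBoundedUnder_le_betan hν hq) (fun _ hq => isCoboundedUnder_le_betan hν hq)
    (convex_Ici 0)

theorem lqSpectrum_continuousOn (hν : ν (Set.Ioc 0 1) = 1) :
    ContinuousOn (lqSpectrum ν) (Set.Ioi 0) := by
  simpa only [interior_Ici] using (lqSpectrum_convexOn hν).continuousOn_interior

end Spectrum

section Summability

variable (ν : Measure ℝ)

/-- `∑_{C ∈ D_{ν,n}} (ν(C) Λ(C))^q`. -/
noncomputable def scaledPartitionSum (n : ℕ) (q : ℝ) : ℝ :=
  ∑ k ∈ dyadicSupport ν n, ((ν (dyadic n k)).toReal * ((2 : ℝ) ^ n)⁻¹) ^ q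

variable {ν}

theorem scaledPartitionSum_eq (hν : ν (Set.Ioc 0 1) = 1) {n : ℕ} (hn : n ≠ 0) (q : ℝ) :
    scaledPartitionSum ν n q = 2 ^ (n * (betan ν n q - q)) := by
  calc scaledPartitionSum ν n q = partitionSum ν n q * ((2 : ℝ) ^ n)⁻¹ ^ q := by
        rw [partitionSum, sum_mul]
        exact sum_congr rfl fun k _ => mul_rpow ENNReal.toReal_nonneg (by positivity)
    _ = 2 ^ (n * (betan ν n q - q)) := by
        rw [partitionSum_eq_two_rpow hν hn, inv_two_pow_rpow, ← rpow_add two_pos, mul_sub,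
          sub_eq_add_neg, mul_neg]

theorem summable_scaledPartitionSum (hν : ν (Set.Ioc 0 1) = 1) {q : ℝ} (hq : 0 ≤ q)
    (hlt : lqSpectrum ν q < q) : Summable (scaledPartitionSum ν · q) := by
  obtain ⟨c, hβc, hcq⟩ := exists_between hlt
  have hρ : (2 : ℝ) ^ (c - q) < 1 := rpow_lt_one_of_one_lt_of_neg one_lt_two (sub_neg.2 hcq)
  refine Summable.of_norm_bounded_eventually (summable_geometric_of_lt_one (by positivity) hρ) ?_
  rw [Nat.cofinite_eq_atTop]
  filter_upwards [eventually_lt_of_limsup_lt hβc (isBoundedUnder_le_betan hν hq),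
    eventually_ne_atTop 0] with n hn hn0
  rw [scaledPartitionSum_eq hν hn0, norm_of_nonneg (by positivity), ← rpow_mul_natCast zero_le_two,
    mul_comm]
  exact rpow_le_rpow_of_exponent_le one_le_two
    (mul_le_mul_of_nonneg_right (by linarith) n.cast_nonneg)

theorem not_summable_scaledPartitionSum (hν : ν (Set.Ioc 0 1) = 1) {q : ℝ} (hq : 0 ≤ q)
    (hlt : q < lqSpectrum ν q) : ¬Summable (scaledPartitionSum ν · q) := fun hsum => by
  obtain ⟨n, hn, hn0, hsmall⟩ := ((frequently_lt_of_lt_limsup (isCoboundedUnder_le_betan hν hq)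
    hlt).and_eventually ((eventually_ne_atTop 0).and
    (hsum.tendsto_atTop_zero.eventually_lt_const one_pos))).exists
  rw [scaledPartitionSum_eq hν hn0] at hsmall
  exact hsmall.not_ge (one_le_rpow one_le_two (mul_nonneg n.cast_nonneg (sub_nonneg.2 hn.le)))

end Summability

theorem stmt8_general (ν : Measure ℝ) (hν : ν (Set.Ioc 0 1) = 1)
    (qbar : ℝ) (hqbar : qbar = sInf {q : ℝ | 0 < q ∧ lqSpectrum ν q - q ≤ 0})
    (hpos : 0 < qbar) :
    qbar ∈ Set.Ioo (0:ℝ) 1 ∧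
    lqSpectrum ν qbar = qbar ∧
    (∀ q ∈ Set.Ioo (0:ℝ) 1, lqSpectrum ν q = q → q = qbar) ∧
    qbar = sInf {q : ℝ | 0 < q ∧
      Summable (fun n : ℕ =>
        ∑ k ∈ (Finset.range (2 ^ n)).filter (fun k => ν (dyadic n k) ≠ 0),
          ((ν (dyadic n k)).toReal * ((2 : ℝ) ^ n)⁻¹) ^ q)} := by
  have hg := strictAntiOn_lqSpectrum_sub_id hν
  have hg1 : lqSpectrum ν 1 - 1 = -1 := by rw [lqSpectrum_one hν, zero_sub]
  have hcont : ContinuousAt (fun q => lqSpectrum ν q - q) qbar :=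
    ((lqSpectrum_continuousOn hν).sub continuousOn_id).continuousAt (Ioi_mem_nhds hpos)
  have hfix : lqSpectrum ν qbar - qbar = 0 :=
    hcont.apply_eq_zero_of_eq_sInf (f := fun q => lqSpectrum ν q - q) hqbar
      ⟨1, one_pos, by rw [hg1]; norm_num⟩ hpos
  have hlt1 : qbar < 1 :=
    (hg.lt_iff_gt (Set.mem_Ioi.2 one_pos) hpos).1 (by rw [hg1, hfix]; norm_num)
  refine ⟨⟨hpos, hlt1⟩, sub_eq_zero.1 hfix, fun q hq hfq => hg.injOn hq.1 hpos ?_, ?_⟩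
  · simp only [hfq, sub_self, hfix]
  have hIoi : Set.Ioi qbar ⊆ {q | 0 < q ∧ Summable (scaledPartitionSum ν · q)} :=
    fun q hq => ⟨hpos.trans hq, summable_scaledPartitionSum hν (hpos.trans hq).le
      (sub_neg.1 (hfix ▸ hg hpos (hpos.trans hq) hq))⟩
  have hIci : {q | 0 < q ∧ Summable (scaledPartitionSum ν · q)} ⊆ Set.Ici qbar :=
    fun q ⟨hq, hsum⟩ => not_lt.1 fun hlt => not_summable_scaledPartitionSum hν hq.le
      (sub_pos.1 (hfix ▸ hg hq hpos hlt)) hsum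
  exact ((isGLB_Ioi.of_subset_of_superset isGLB_Ici hIoi hIci).csInf_eq
    ⟨1, hIoi hlt1⟩).symm

/-- If `q̄ = inf{q > 0 : β_ν(q) - q ≤ 0} > 0`, then `q̄ ∈ (0,1)`, `q̄` is the unique
fixed point of `β_ν` on `(0,1)`, and `q̄ = inf{q > 0 : Σ_{C ∈ D_ν} (ν(C)Λ(C))^q < ∞}`. -/
theorem stmt8 (ν : Measure ℝ) [IsProbabilityMeasure ν] (hν : ν (Set.Ioc 0 1) = 1)
    (qbar : ℝ) (hqbar : qbar = sInf {q : ℝ | 0 < q ∧ lqSpectrum ν q - q ≤ 0})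
    (hpos : 0 < qbar) :
    qbar ∈ Set.Ioo (0:ℝ) 1 ∧
    lqSpectrum ν qbar = qbar ∧
    (∀ q ∈ Set.Ioo (0:ℝ) 1, lqSpectrum ν q = q → q = qbar) ∧
    qbar = sInf {q : ℝ | 0 < q ∧
      Summable (fun n : ℕ =>
        ∑ k ∈ (Finset.range (2 ^ n)).filter (fun k => ν (dyadic n k) ≠ 0),
          ((ν (dyadic n k)).toReal * ((2 : ℝ) ^ n)⁻¹) ^ q)} :=
  stmt8_general ν hν qbar hqbar hpos
end

section
/- Let ν be a Borel probability measure on (0,1] with a nonzero absolutely continuous part with density ρ ≥ 0 (ρ not a.e. zero). Then for every q ∈ (0,1) and every n, (1/(n log 2)) log Σ_{C∈D_{ν,n}} ν(C)^q ≥ (1/(n log 2)) log ∫_{[0,1]} ρ^q dΛ + 1 − q; consequently β_ν(q) = lim_n β_n(q) = 1 − q for all q ∈ [0,1]. -/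
open MeasureTheory
open scoped Classical

/-!
On a dyadic cell `C` of generation `n`, Hölder's inequality and `ν ≥ ρ Λ` give
`∫_C ρ^q ≤ (∫_C ρ)^q Λ(C)^{1-q} ≤ 2^{-n(1-q)} ν(C)^q`; summing over the cells,
`2^{n(1-q)} ∫ ρ^q ≤ Σ_C ν(C)^q`, which is the lower bound on `β_n(q)`. Conversely, by concavity
of `t ↦ t^q` the sum `Σ_{C ∈ D_{ν,n}} ν(C)^q` is at most `#D_{ν,n}^{1-q} ≤ 2^{n(1-q)}`, so
`β_n(q) ≤ 1 - q`, and the two bounds squeeze `β_n(q)` to `1 - q`.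

At `q = 0` the density bound is useless (`ρ ^ 0 = 1` even where `ρ = 0`); there the same concavity
estimate `Σ_C ν(C)^{1/2} ≤ #D_{ν,n}^{1/2}` turns the bound at `q = 1/2` into
`#D_{ν,n} ≥ 2^n (∫ ρ^{1/2})^2`.
-/

open Set Filter Topology Function
open scoped ENNReal Finset

section Analysis

variable {α : Type*} [MeasurableSpace α]

theorem lintegral_rpow_le_rpow_lintegral_mul_measure_univ (μ : Measure α) {g : α → ℝ≥0∞}
    (hg : AEMeasurable g μ) {q : ℝ} (hq0 : 0 < q) (hq1 : q ≤ 1) :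
    ∫⁻ x, g x ^ q ∂μ ≤ (∫⁻ x, g x ∂μ) ^ q * μ univ ^ (1 - q) := by
  have h := eLpNorm'_le_eLpNorm'_mul_rpow_measure_univ hq0 hq1 hg.aestronglyMeasurable (μ := μ)
  simp only [eLpNorm'_eq_lintegral_enorm, enorm_eq_self, ENNReal.rpow_one, div_one] at h
  calc ∫⁻ x, g x ^ q ∂μ = ((∫⁻ x, g x ^ q ∂μ) ^ (1 / q)) ^ q := by
        rw [← ENNReal.rpow_mul, one_div_mul_cancel hq0.ne', ENNReal.rpow_one]
    _ ≤ ((∫⁻ x, g x ∂μ) * μ univ ^ (1 / q - 1)) ^ q := by gcongr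
    _ = (∫⁻ x, g x ∂μ) ^ q * μ univ ^ (1 - q) := by
        rw [ENNReal.mul_rpow_of_nonneg _ _ hq0.le, ← ENNReal.rpow_mul]
        congr 2
        field_simp

theorem setLIntegral_rpow_le_sum_measure_rpow_mul {ι : Type*} {μ ν : Measure α} [SFinite μ]
    {g : α → ℝ≥0∞} {q : ℝ} (hq0 : 0 < q) (hq1 : q ≤ 1) {s : Set α} {t : Finset ι}
    {C : ι → Set α} (hs : s ⊆ ⋃ i ∈ t, C i) (hg : ∀ i ∈ t, AEMeasurable g (μ.restrict (C i)))
    (hC : ∀ i ∈ t, ∫⁻ x in C i, g x ∂μ ≤ ν (C i)) :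
    ∫⁻ x in s, g x ^ q ∂μ ≤ ∑ i ∈ t, ν (C i) ^ q * μ (C i) ^ (1 - q) := by
  calc ∫⁻ x in s, g x ^ q ∂μ
      ≤ ∑ i ∈ t, ∫⁻ x in C i, g x ^ q ∂μ := by
        simp only [← withDensity_apply' _ (s := s), ← withDensity_apply' _ (s := C _)]
        exact (measure_mono hs).trans (measure_biUnion_finset_le t C)
    _ ≤ ∑ i ∈ t, (∫⁻ x in C i, g x ∂μ) ^ q * μ (C i) ^ (1 - q) := by
        gcongr with i hi
        simpa using lintegral_rpow_le_rpow_lintegral_mul_measure_univ _ (hg i hi) hq0 hq1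
    _ ≤ ∑ i ∈ t, ν (C i) ^ q * μ (C i) ^ (1 - q) := by
        gcongr with i hi
        exact hC i hi

theorem integrableOn_rpow_of_le_one {μ : Measure α} {s : Set α} {ρ : α → ℝ} {q : ℝ}
    (hs : μ s ≠ ∞) (hρ0 : ∀ x, 0 ≤ ρ x) (hρint : IntegrableOn ρ s μ) (hq0 : 0 ≤ q) (hq1 : q ≤ 1) :
    IntegrableOn (fun x => ρ x ^ q) s μ := by
  refine Integrable.mono' ((integrableOn_const (C := (1 : ℝ)) hs).add hρint)
    (hρint.aestronglyMeasurable.aemeasurable.pow_const q).aestronglyMeasurable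
    (Eventually.of_forall fun x => ?_)
  rw [Real.norm_of_nonneg (Real.rpow_nonneg (hρ0 x) q), Pi.add_apply]
  rcases le_total (ρ x) 1 with hx | hx
  · linarith [Real.rpow_le_one (hρ0 x) hx hq0, hρ0 x]
  · linarith [Real.rpow_le_self_of_one_le hx hq1]

theorem setIntegral_rpow_pos {μ : Measure α} {s : Set α} {ρ : α → ℝ} {q : ℝ} (hs : μ s ≠ ∞)
    (hρ0 : ∀ x, 0 ≤ ρ x) (hρint : IntegrableOn ρ s μ) (hρpos : 0 < ∫ x in s, ρ x ∂μ) (hq0 : 0 < q) (hq1 : q ≤ 1) :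
    0 < ∫ x in s, ρ x ^ q ∂μ := by
  have hsupp : support (fun x => ρ x ^ q) = support ρ := by
    ext x
    simp [Real.rpow_eq_zero (hρ0 x) hq0.ne']
  rw [setIntegral_pos_iff_support_of_nonneg_ae (Eventually.of_forall fun x => hρ0 x) hρint]
    at hρpos
  rwa [setIntegral_pos_iff_support_of_nonneg_ae
    (Eventually.of_forall fun x => Real.rpow_nonneg (hρ0 x) q)
    (integrableOn_rpow_of_le_one hs hρ0 hρint hq0.le hq1), hsupp]

end Analysis

theorem Finset.sum_rpow_le_card_rpow_mul_rpow_sum {ι : Type*} (s : Finset ι) {f : ι → ℝ}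
    (hf : ∀ i ∈ s, 0 ≤ f i) {q : ℝ} (hq0 : 0 ≤ q) (hq1 : q ≤ 1) :
    ∑ i ∈ s, f i ^ q ≤ (#s : ℝ) ^ (1 - q) * (∑ i ∈ s, f i) ^ q := by
  rcases s.eq_empty_or_nonempty with rfl | hs
  · simp only [Finset.sum_empty]; positivity
  have hcard : (0 : ℝ) < #s := by exact_mod_cast hs.card_pos
  have jensen := (Real.concaveOn_rpow hq0 hq1).le_map_sum (t := s) (w := fun _ => (#s : ℝ)⁻¹)
    (p := f) (fun _ _ => by positivity) (by simp [hcard.ne']) hf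
  simp only [smul_eq_mul, ← Finset.mul_sum] at jensen
  rw [Real.mul_rpow (by positivity) (Finset.sum_nonneg hf), Real.inv_rpow hcard.le] at jensen
  calc ∑ i ∈ s, f i ^ q = #s * ((#s : ℝ)⁻¹ * ∑ i ∈ s, f i ^ q) := by field_simp
    _ ≤ #s * (((#s : ℝ) ^ q)⁻¹ * (∑ i ∈ s, f i) ^ q) := by gcongr
    _ = (#s : ℝ) ^ (1 - q) * (∑ i ∈ s, f i) ^ q := by
        rw [Real.rpow_sub hcard, Real.rpow_one]; ring

theorem measurableSet_dyadic (n k : ℕ) : MeasurableSet (dyadic n k) := measurableSet_Ioc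

theorem pairwise_disjoint_dyadic (n : ℕ) : Pairwise (Disjoint on dyadic n) := by
  have hmono : Monotone fun k : ℕ => (k : ℝ) / 2 ^ n := fun k l h => by simp only; gcongr
  have h := hmono.pairwise_disjoint_on_Ioc_succ
  simp only [Order.succ_eq_add_one, Nat.cast_add_one] at h
  exact h

theorem dyadic_subset_Ioc {n k : ℕ} (hk : k < 2 ^ n) : dyadic n k ⊆ Ioc 0 1 := by
  have hk' : (k : ℝ) + 1 ≤ 2 ^ n := by exact_mod_cast hk
  exact Ioc_subset_Ioc (by positivity) ((div_le_one (by positivity)).2 hk')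

theorem Ioc_subset_biUnion_dyadic (n : ℕ) :
    Ioc (0 : ℝ) 1 ⊆ ⋃ k ∈ Finset.range (2 ^ n), dyadic n k := by
  simpa [dyadic] using Ioc_subset_biUnion_Ioc (2 ^ n) fun k : ℕ => (k : ℝ) / 2 ^ n

theorem volume_dyadic (n k : ℕ) : volume (dyadic n k) = (2 ^ n)⁻¹ := by
  rw [dyadic, Real.volume_Ioc, ← sub_div, add_sub_cancel_left, one_div,
    ENNReal.ofReal_inv_of_pos (by positivity), ENNReal.ofReal_pow zero_le_two, ENNReal.ofReal_ofNat]

noncomputable def dyadicPartitionSum (ν : Measure ℝ) (n : ℕ) (q : ℝ) : ℝ :=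
  ∑ k ∈ (Finset.range (2 ^ n)).filter (fun k => ν (dyadic n k) ≠ 0), ((ν (dyadic n k)).toReal) ^ q

section PartitionSum

variable {ν : Measure ℝ} {n : ℕ} {q : ℝ}

theorem dyadicPartitionSum_nonneg (ν : Measure ℝ) (n : ℕ) (q : ℝ) :
    0 ≤ dyadicPartitionSum ν n q :=
  Finset.sum_nonneg fun _ _ => by positivity

theorem betan_eq_logb_div (ν : Measure ℝ) (n : ℕ) (q : ℝ) :
    betan ν n q = Real.logb 2 (dyadicPartitionSum ν n q) / n := by
  rw [betan, dyadicPartitionSum, Real.logb]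
  ring

theorem toReal_sum_rpow_eq_dyadicPartitionSum [IsFiniteMeasure ν] (hq : 0 < q) :
    (∑ k ∈ Finset.range (2 ^ n), ν (dyadic n k) ^ q).toReal = dyadicPartitionSum ν n q := by
  rw [dyadicPartitionSum, ← Finset.sum_filter_of_ne (p := fun k => ν (dyadic n k) ≠ 0)
    fun k _ h hk => h (by simp [hk, hq]),
    ENNReal.toReal_sum fun k _ => ENNReal.rpow_ne_top_of_nonneg hq.le (measure_ne_top _ _)]
  simp only [ENNReal.toReal_rpow]

theorem dyadicPartitionSum_le_rpow_zero [IsProbabilityMeasure ν] (hq0 : 0 ≤ q) (hq1 : q ≤ 1) :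
    dyadicPartitionSum ν n q ≤ dyadicPartitionSum ν n 0 ^ (1 - q) := by
  set F := (Finset.range (2 ^ n)).filter fun k => ν (dyadic n k) ≠ 0
  have hmass : ∑ k ∈ F, (ν (dyadic n k)).toReal ≤ 1 := by
    simpa [measureReal_def] using sum_measureReal_le_measureReal_univ (μ := ν) (s := F)
      (fun k _ => measurableSet_dyadic n k) ((pairwise_disjoint_dyadic n).set_pairwise _)
  calc dyadicPartitionSum ν n q
      ≤ (#F : ℝ) ^ (1 - q) * (∑ k ∈ F, (ν (dyadic n k)).toReal) ^ q :=
        F.sum_rpow_le_card_rpow_mul_rpow_sum (fun _ _ => ENNReal.toReal_nonneg) hq0 hq1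
    _ ≤ (#F : ℝ) ^ (1 - q) * 1 := by
        gcongr
        exact Real.rpow_le_one (Finset.sum_nonneg fun _ _ => ENNReal.toReal_nonneg) hmass hq0
    _ = dyadicPartitionSum ν n 0 ^ (1 - q) := by simp [dyadicPartitionSum, F]

theorem dyadicPartitionSum_zero_le : dyadicPartitionSum ν n 0 ≤ 2 ^ n := by
  simp only [dyadicPartitionSum, Real.rpow_zero, Finset.sum_const, nsmul_eq_mul, mul_one]
  exact_mod_cast (Finset.card_filter_le _ _).trans (Finset.card_range _).le

theorem dyadicPartitionSum_le [IsProbabilityMeasure ν] (hq0 : 0 ≤ q) (hq1 : q ≤ 1) :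
    dyadicPartitionSum ν n q ≤ 2 ^ ((n : ℝ) * (1 - q)) := by
  calc dyadicPartitionSum ν n q ≤ dyadicPartitionSum ν n 0 ^ (1 - q) :=
        dyadicPartitionSum_le_rpow_zero hq0 hq1
    _ ≤ (2 ^ n : ℝ) ^ (1 - q) := Real.rpow_le_rpow (dyadicPartitionSum_nonneg ν n 0)
        dyadicPartitionSum_zero_le (by linarith)
    _ = 2 ^ ((n : ℝ) * (1 - q)) := by rw [← Real.rpow_natCast, ← Real.rpow_mul zero_le_two]

theorem mul_rpow_le_dyadicPartitionSum_zero [IsProbabilityMeasure ν] {c : ℝ} (hq0 : 0 ≤ q)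
    (hq1 : q < 1) (hc : 0 ≤ c) (h : 2 ^ ((n : ℝ) * (1 - q)) * c ≤ dyadicPartitionSum ν n q) :
    2 ^ (n : ℝ) * c ^ (1 - q)⁻¹ ≤ dyadicPartitionSum ν n 0 := by
  have hq : 1 - q ≠ 0 := by linarith
  calc 2 ^ (n : ℝ) * c ^ (1 - q)⁻¹ = (2 ^ ((n : ℝ) * (1 - q)) * c) ^ (1 - q)⁻¹ := by
        rw [Real.mul_rpow (by positivity) hc, ← Real.rpow_mul zero_le_two, mul_inv_cancel_right₀ hq]
    _ ≤ (dyadicPartitionSum ν n 0 ^ (1 - q)) ^ (1 - q)⁻¹ := by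
        gcongr
        exact h.trans (dyadicPartitionSum_le_rpow_zero hq0 hq1.le)
    _ = dyadicPartitionSum ν n 0 := Real.rpow_rpow_inv (dyadicPartitionSum_nonneg ν n 0) hq

theorem rpow_mul_toReal_setLIntegral_le_dyadicPartitionSum [IsFiniteMeasure ν] {g : ℝ → ℝ≥0∞}
    (hq0 : 0 < q) (hq1 : q ≤ 1)
    (hg : ∀ k < 2 ^ n, AEMeasurable g (volume.restrict (dyadic n k)))
    (hC : ∀ k < 2 ^ n, ∫⁻ x in dyadic n k, g x ≤ ν (dyadic n k)) :
    2 ^ ((n : ℝ) * (1 - q)) * (∫⁻ x in Ioc 0 1, g x ^ q).toReal ≤ dyadicPartitionSum ν n q := by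
  have hcover := setLIntegral_rpow_le_sum_measure_rpow_mul hq0 hq1 (Ioc_subset_biUnion_dyadic n)
    (fun k hk => hg k (Finset.mem_range.1 hk)) (fun k hk => hC k (Finset.mem_range.1 hk))
  simp only [volume_dyadic, ← Finset.sum_mul] at hcover
  have hscale : (2 : ℝ≥0∞) ^ ((n : ℝ) * (1 - q)) * ((2 ^ n)⁻¹) ^ (1 - q) = 1 := by
    rw [← ENNReal.rpow_natCast, ENNReal.inv_rpow, ← ENNReal.rpow_mul, ENNReal.mul_inv_cancel]
    all_goals simp
  calc 2 ^ ((n : ℝ) * (1 - q)) * (∫⁻ x in Ioc 0 1, g x ^ q).toReal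
      = (2 ^ ((n : ℝ) * (1 - q)) * ∫⁻ x in Ioc 0 1, g x ^ q).toReal := by
        rw [ENNReal.toReal_mul, ← ENNReal.toReal_rpow, ENNReal.toReal_ofNat]
    _ ≤ (∑ k ∈ Finset.range (2 ^ n), ν (dyadic n k) ^ q).toReal := by
        refine ENNReal.toReal_mono (ENNReal.sum_ne_top.2 fun k _ =>
          ENNReal.rpow_ne_top_of_nonneg hq0.le (measure_ne_top _ _)) ?_
        calc _ ≤ 2 ^ ((n : ℝ) * (1 - q)) *
              ((∑ k ∈ Finset.range (2 ^ n), ν (dyadic n k) ^ q) * ((2 ^ n)⁻¹) ^ (1 - q)) := by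
              gcongr
          _ = _ := by rw [mul_comm, mul_assoc, mul_comm (_ ^ (1 - q)), hscale, mul_one]
    _ = dyadicPartitionSum ν n q := toReal_sum_rpow_eq_dyadicPartitionSum hq0

theorem rpow_mul_setIntegral_rpow_le_dyadicPartitionSum [IsFiniteMeasure ν] {ρ : ℝ → ℝ}
    (hρ0 : ∀ x, 0 ≤ ρ x) (hρint : IntegrableOn ρ (Icc 0 1))
    (hac : ∀ s : Set ℝ, MeasurableSet s → ENNReal.ofReal (∫ x in s, ρ x) ≤ ν s)
    (hq0 : 0 < q) (hq1 : q ≤ 1) (n : ℕ) :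
    2 ^ ((n : ℝ) * (1 - q)) * ∫ x in Icc (0 : ℝ) 1, ρ x ^ q ≤ dyadicPartitionSum ν n q := by
  have hcell : ∀ k < 2 ^ n, IntegrableOn ρ (dyadic n k) :=
    fun k hk => hρint.mono_set ((dyadic_subset_Ioc hk).trans Ioc_subset_Icc_self)
  have hmass : ∀ k < 2 ^ n, ∫⁻ x in dyadic n k, ENNReal.ofReal (ρ x) ≤ ν (dyadic n k) := by
    intro k hk
    rw [← ofReal_integral_eq_lintegral_ofReal (hcell k hk) (Eventually.of_forall hρ0)]
    exact hac _ (measurableSet_dyadic n k)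
  convert rpow_mul_toReal_setLIntegral_le_dyadicPartitionSum hq0 hq1
    (fun k hk => (hcell k hk).aestronglyMeasurable.aemeasurable.ennreal_ofReal) hmass using 3
  rw [integral_Icc_eq_integral_Ioc, integral_eq_lintegral_of_nonneg_ae
    (Eventually.of_forall fun x => Real.rpow_nonneg (hρ0 x) q)
    ((hρint.mono_set Ioc_subset_Icc_self).aestronglyMeasurable.aemeasurable.pow_const q
      ).aestronglyMeasurable]
  simp only [ENNReal.ofReal_rpow_of_nonneg (hρ0 _) hq0.le]

theorem betan_le_one_sub [IsProbabilityMeasure ν] (hq0 : 0 ≤ q) (hq1 : q ≤ 1) (n : ℕ) :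
    betan ν n q ≤ 1 - q := by
  rw [betan_eq_logb_div]
  refine div_le_of_le_mul₀ n.cast_nonneg (by linarith) ?_
  rcases (dyadicPartitionSum_nonneg ν n q).eq_or_lt with hS | hS
  · rw [← hS, Real.logb_zero]
    positivity
  · rw [Real.logb_le_iff_le_rpow one_lt_two hS, mul_comm]
    exact dyadicPartitionSum_le hq0 hq1

theorem logb_div_add_le_betan {c : ℝ} (hn : n ≠ 0) (hc : 0 < c)
    (h : 2 ^ ((n : ℝ) * (1 - q)) * c ≤ dyadicPartitionSum ν n q) :
    Real.logb 2 c / n + (1 - q) ≤ betan ν n q := by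
  have hlogb : (n : ℝ) * (1 - q) + Real.logb 2 c ≤ Real.logb 2 (dyadicPartitionSum ν n q) := by
    calc (n : ℝ) * (1 - q) + Real.logb 2 c = Real.logb 2 (2 ^ ((n : ℝ) * (1 - q)) * c) := by
          rw [Real.logb_mul (by positivity) hc.ne', Real.logb_rpow zero_lt_two one_lt_two.ne']
      _ ≤ _ := Real.logb_le_logb_of_le one_lt_two (by positivity) h
  rw [betan_eq_logb_div, le_div_iff₀ (by positivity)]
  calc (Real.logb 2 c / n + (1 - q)) * n = n * (1 - q) + Real.logb 2 c := by field_simp; ring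
    _ ≤ _ := hlogb

theorem tendsto_betan_of_le [IsProbabilityMeasure ν] {c : ℝ} (hq0 : 0 ≤ q) (hq1 : q ≤ 1)
    (h : ∀ n ≠ 0, Real.logb 2 c / n + (1 - q) ≤ betan ν n q) :
    Tendsto (fun n => betan ν n q) atTop (𝓝 (1 - q)) := by
  have hlower : Tendsto (fun n : ℕ => Real.logb 2 c / n + (1 - q)) atTop (𝓝 (1 - q)) := by
    simpa using (tendsto_const_div_atTop_nhds_zero_nat (Real.logb 2 c)).add_const (1 - q)
  exact tendsto_of_tendsto_of_tendsto_of_le_of_le' hlower tendsto_const_nhds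
    ((eventually_ne_atTop 0).mono h) (Eventually.of_forall (betan_le_one_sub hq0 hq1))

end PartitionSum

theorem stmt10_general (ν : Measure ℝ) [IsProbabilityMeasure ν]
    (ρ : ℝ → ℝ) (hρ0 : ∀ x, 0 ≤ ρ x)
    (hρint : IntegrableOn ρ (Set.Icc 0 1))
    (hρpos : 0 < ∫ x in Set.Icc (0:ℝ) 1, ρ x)
    (hac : ∀ s : Set ℝ, MeasurableSet s → ENNReal.ofReal (∫ x in s, ρ x) ≤ ν s) :
    (∀ q ∈ Set.Ioo (0:ℝ) 1, ∀ n : ℕ, 1 ≤ n →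
      (1 / ((n : ℝ) * Real.log 2)) * Real.log (∫ x in Set.Icc (0:ℝ) 1, (ρ x) ^ q)
        + 1 - q ≤ betan ν n q) ∧
    (∀ q ∈ Set.Icc (0:ℝ) 1,
      Filter.Tendsto (fun n => betan ν n q) Filter.atTop (nhds (1 - q))) ∧
    (∀ q ∈ Set.Icc (0:ℝ) 1, lqSpectrum ν q = 1 - q) := by
  set I : ℝ → ℝ := fun q => ∫ x in Icc (0 : ℝ) 1, ρ x ^ q
  have hIpos : ∀ q ∈ Ioc (0 : ℝ) 1, 0 < I q := fun q hq =>
    setIntegral_rpow_pos (by simp) hρ0 hρint hρpos hq.1 hq.2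
  have hlower : ∀ q ∈ Ioc (0 : ℝ) 1, ∀ n ≠ 0, Real.logb 2 (I q) / n + (1 - q) ≤ betan ν n q :=
    fun q hq n hn => logb_div_add_le_betan hn (hIpos q hq)
      (rpow_mul_setIntegral_rpow_le_dyadicPartitionSum hρ0 hρint hac hq.1 hq.2 n)
  have hlower₀ : ∀ n ≠ 0, Real.logb 2 (I (1 / 2) ^ (2 : ℝ)) / n + (1 - 0) ≤ betan ν n 0 := by
    intro n hn
    have hhalf : (1 / 2 : ℝ) ∈ Ioc 0 1 := by norm_num
    refine logb_div_add_le_betan hn (by have := hIpos _ hhalf; positivity) ?_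
    have := mul_rpow_le_dyadicPartitionSum_zero (by norm_num) (by norm_num) (hIpos _ hhalf).le
      (rpow_mul_setIntegral_rpow_le_dyadicPartitionSum hρ0 hρint hac hhalf.1 hhalf.2 n)
    norm_num at this ⊢
    exact this
  have htendsto : ∀ q ∈ Icc (0 : ℝ) 1, Tendsto (fun n => betan ν n q) atTop (𝓝 (1 - q)) := by
    rintro q ⟨hq0, hq1⟩
    rcases hq0.eq_or_lt with rfl | hq0
    · exact tendsto_betan_of_le le_rfl zero_le_one hlower₀
    · exact tendsto_betan_of_le hq0.le hq1 (hlower q ⟨hq0, hq1⟩)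
  refine ⟨fun q hq n hn => ?_, htendsto, fun q hq => (htendsto q hq).limsup_eq⟩
  convert hlower q ⟨hq.1, hq.2.le⟩ n (by omega) using 1
  rw [Real.logb]
  ring

/-- If a probability measure `ν` on `(0,1]` has a nonzero absolutely continuous part
with density `ρ`, then for `q ∈ (0,1)` and every `n ≥ 1`,
`β_n(q) ≥ (1/(n log 2)) log ∫ ρ^q dΛ + 1 - q`; consequently the `L^q`-spectrum exists
as a limit and `β_ν(q) = 1 - q` for all `q ∈ [0,1]`. -/
theorem stmt10 (ν : Measure ℝ) [IsProbabilityMeasure ν] (hν : ν (Set.Ioc 0 1) = 1)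
    (ρ : ℝ → ℝ) (hρmeas : Measurable ρ) (hρ0 : ∀ x, 0 ≤ ρ x)
    (hρint : IntegrableOn ρ (Set.Icc 0 1))
    (hρpos : 0 < ∫ x in Set.Icc (0:ℝ) 1, ρ x)
    (hac : ∀ s : Set ℝ, MeasurableSet s → ENNReal.ofReal (∫ x in s, ρ x) ≤ ν s) :
    (∀ q ∈ Set.Ioo (0:ℝ) 1, ∀ n : ℕ, 1 ≤ n →
      (1 / ((n : ℝ) * Real.log 2)) * Real.log (∫ x in Set.Icc (0:ℝ) 1, (ρ x) ^ q)
        + 1 - q ≤ betan ν n q) ∧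
    (∀ q ∈ Set.Icc (0:ℝ) 1,
      Filter.Tendsto (fun n => betan ν n q) Filter.atTop (nhds (1 - q))) ∧
    (∀ q ∈ Set.Icc (0:ℝ) 1, lqSpectrum ν q = 1 - q) :=
  stmt10_general ν ρ hρ0 hρint hρpos hac
end
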